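/- For every integer j ≥ 0 and every t > 0, q_j(t) = (1/t)·∫_0^t p_j(s) ds. -/

import Mathlib

open MeasureTheory ProbabilityTheory Real

open MeasureTheory ProbabilityTheory Real

/-- Signless Stirling numbers of the first kind: coefficient of `x^j` in `x(x+1)⋯(x+k-1)`. -/
noncomputable def stirling1 (k j : ℕ) : ℝ :=
  (∏ i ∈ Finset.range k, (Polynomial.X + Polynomial.C (i : ℝ))).coeff j

/-- Stirling numbers of the second kind. -/
def stirling2 : ℕ → ℕ → ℕ
  | 0, 0 => 1
  | 0, _ + 1 => 0
  | _ + 1, 0 => 0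
  | n + 1, k + 1 => (k + 1) * stirling2 n (k + 1) + stirling2 n k

/-- `p_j(t) = e^{-t} Σ_{k≥j} (t^k/k!) σ₁(k,j)/k!` (terms with `k<j` vanish). -/
noncomputable def pfn (j : ℕ) (t : ℝ) : ℝ :=
  Real.exp (-t) * ∑' k : ℕ, t ^ k / (Nat.factorial k : ℝ) * (stirling1 k j / (Nat.factorial k : ℝ))

/-- `q_j(t) = e^{-t} Σ_{k≥0} (t^k/(k+1)!) Σ_{i=0}^k σ₁(i,j)/i!`. -/
noncomputable def qfn (j : ℕ) (t : ℝ) : ℝ :=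
  Real.exp (-t) * ∑' k : ℕ, t ^ k / (Nat.factorial (k + 1) : ℝ) *
    ∑ i ∈ Finset.range (k + 1), stirling1 i j / (Nat.factorial i : ℝ)

/-- `I(t,s) = ∫_s^t e^{-ξ}/ξ dξ`. -/
noncomputable def Ifun (t s : ℝ) : ℝ := ∫ ξ in s..t, Real.exp (-ξ) / ξ

/-- `I(s) = ∫_s^∞ e^{-ξ}/ξ dξ`. -/
noncomputable def Iinf (s : ℝ) : ℝ := ∫ ξ in Set.Ioi s, Real.exp (-ξ) / ξ

/-- `I₂(t,s) = ∫_s^t e^{-ξ}/ξ² dξ`. -/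
noncomputable def I2fun (t s : ℝ) : ℝ := ∫ ξ in s..t, Real.exp (-ξ) / ξ ^ 2

/-- `I₂(s) = ∫_s^∞ e^{-ξ}/ξ² dξ`. -/
noncomputable def I2inf (s : ℝ) : ℝ := ∫ ξ in Set.Ioi s, Real.exp (-ξ) / ξ ^ 2

/-- `J(t) = ∫_0^t (e^ξ - 1)/ξ dξ`. -/
noncomputable def Jfun (t : ℝ) : ℝ := ∫ ξ in (0:ℝ)..t, (Real.exp ξ - 1) / ξ

/-!
Write `a k = σ₁(k,j)/k!` and `b k = a 0 + ⋯ + a k`, so that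
`t q_j(t) = e^{-t} ∑ b k t^(k+1)/(k+1)!`. The series `∑ b k t^(k+1)/(k+1)!` is a termwise
antiderivative of `∑ b k t^k/k!`, and the difference of the two is `∑ (b k - b (k-1)) t^k/k! =
∑ a k t^k/k!`; hence `t q_j(t)` has derivative `p_j(t)` and vanishes at `0`, and the identity is
the fundamental theorem of calculus. Termwise differentiation is legitimate because
`0 ≤ σ₁(k,j) ≤ k!`, so `b k ≤ k + 1` grows at most exponentially.
-/

open Finset Nat Polynomial

lemma stirling1_succ_zero (k : ℕ) : stirling1 (k + 1) 0 = k * stirling1 k 0 := by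
  simp [stirling1, prod_range_succ, mul_coeff_zero, mul_comm]

lemma stirling1_succ_succ (k j : ℕ) :
    stirling1 (k + 1) (j + 1) = stirling1 k j + k * stirling1 k (j + 1) := by
  rw [stirling1, prod_range_succ, mul_add, coeff_add, coeff_mul_X, coeff_mul_C, mul_comm]
  rfl

lemma stirling1_nonneg (k j : ℕ) : 0 ≤ stirling1 k j := by
  induction k generalizing j with
  | zero => by_cases hj : j = 0 <;> simp [stirling1, coeff_one, hj]
  | succ k ih =>
    cases j with
    | zero => rw [stirling1_succ_zero]; exact mul_nonneg k.cast_nonneg (ih 0)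
    | succ j =>
      rw [stirling1_succ_succ]
      exact add_nonneg (ih j) (mul_nonneg k.cast_nonneg (ih _))

lemma stirling1_le_factorial (k j : ℕ) : stirling1 k j ≤ k ! := by
  induction k generalizing j with
  | zero => by_cases hj : j = 0 <;> simp [stirling1, coeff_one, hj]
  | succ k ih =>
    have hk : (0 : ℝ) ≤ k := k.cast_nonneg
    rw [factorial_succ, cast_mul, cast_succ]
    cases j with
    | zero => rw [stirling1_succ_zero]; nlinarith [ih 0, stirling1_nonneg k 0]
    | succ j => rw [stirling1_succ_succ]; nlinarith [ih j, ih (j + 1)]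

lemma abs_sum_range_stirling1_div_factorial_le (j n : ℕ) :
    |∑ i ∈ range (n + 1), stirling1 i j / i !| ≤ 2 ^ n := by
  have hle : ∀ i, stirling1 i j / i ! ≤ 1 := fun i =>
    div_le_one_of_le₀ (stirling1_le_factorial i j) (cast_nonneg _)
  rw [abs_of_nonneg (sum_nonneg fun i _ => div_nonneg (stirling1_nonneg i j) (cast_nonneg _))]
  calc ∑ i ∈ range (n + 1), stirling1 i j / i ! ≤ ∑ _i ∈ range (n + 1), (1 : ℝ) :=
        sum_le_sum fun i _ => hle i
    _ = n + 1 := by simp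
    _ ≤ 2 ^ n := by exact_mod_cast n.lt_two_pow_self

lemma abs_stirling1_div_factorial_le_one (j n : ℕ) : |stirling1 n j / n !| ≤ 1 := by
  rw [abs_of_nonneg (div_nonneg (stirling1_nonneg n j) (cast_nonneg _))]
  exact div_le_one_of_le₀ (stirling1_le_factorial n j) (cast_nonneg _)

section ExponentialGeneratingFunction

variable {c : ℕ → ℝ} {C R : ℝ}

lemma norm_pow_div_factorial_mul_le (hc : ∀ n, |c n| ≤ C * R ^ n) {r y : ℝ} (hy : |y| ≤ r)
    (n : ℕ) : ‖y ^ n / n ! * c n‖ ≤ C * (R * r) ^ n / n ! :=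
  calc ‖y ^ n / n ! * c n‖ = |y| ^ n / n ! * |c n| := by
        rw [Real.norm_eq_abs, abs_mul, abs_div, abs_pow, Nat.abs_cast]
    _ ≤ r ^ n / n ! * (C * R ^ n) := by
        have := (abs_nonneg y).trans hy
        gcongr; exact hc n
    _ = C * (R * r) ^ n / n ! := by ring

lemma summable_pow_div_factorial_mul (hc : ∀ n, |c n| ≤ C * R ^ n) (x : ℝ) :
    Summable fun n => x ^ n / n ! * c n :=
  .of_norm_bounded
    ((Real.summable_pow_div_factorial (R * |x|)).mul_left C |>.congr fun n => by ring)
    (norm_pow_div_factorial_mul_le hc le_rfl)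

lemma continuous_tsum_pow_div_factorial_mul (hc : ∀ n, |c n| ≤ C * R ^ n) :
    Continuous fun y => ∑' n, y ^ n / n ! * c n := by
  refine continuous_iff_continuousAt.2 fun x => ?_
  have hball : ∀ y ∈ Metric.ball (0 : ℝ) (|x| + 1), |y| ≤ |x| + 1 := fun y hy =>
    (mem_ball_zero_iff.1 hy).le
  refine (continuousOn_tsum (fun n => by fun_prop)
    ((Real.summable_pow_div_factorial (R * (|x| + 1))).mul_left C |>.congr fun n => by ring)
    fun n y hy => norm_pow_div_factorial_mul_le hc (hball y hy) n).continuousAt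
    (Metric.isOpen_ball.mem_nhds (by simp))

lemma hasDerivAt_pow_succ_div_factorial (n : ℕ) (y : ℝ) :
    HasDerivAt (fun y : ℝ => y ^ (n + 1) / (n + 1)!) (y ^ n / n !) y := by
  refine ((hasDerivAt_pow (n + 1) y).div_const ((n + 1)! : ℝ)).congr_deriv ?_
  rw [factorial_succ, cast_mul, add_tsub_cancel_right, mul_div_mul_left _ _ (by positivity)]

lemma hasDerivAt_tsum_pow_succ_div_factorial_mul (hc : ∀ n, |c n| ≤ C * R ^ n) (x : ℝ) :
    HasDerivAt (fun y => ∑' n, y ^ (n + 1) / (n + 1)! * c n) (∑' n, x ^ n / n ! * c n) x := by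
  have hball : ∀ y ∈ Metric.ball (0 : ℝ) (|x| + 1), |y| ≤ |x| + 1 := fun y hy =>
    (mem_ball_zero_iff.1 hy).le
  refine hasDerivAt_tsum_of_isPreconnected
    ((Real.summable_pow_div_factorial (R * (|x| + 1))).mul_left C |>.congr fun n => by ring)
    Metric.isOpen_ball (convex_ball _ _).isPreconnected
    (fun n y _ => (hasDerivAt_pow_succ_div_factorial n y).mul_const (c n))
    (fun n y hy => norm_pow_div_factorial_mul_le hc (hball y hy) n)
    (Metric.mem_ball_self (by positivity)) (by simp) (by simp)

lemma summable_pow_succ_div_factorial_mul (hc : ∀ n, |c n| ≤ C * R ^ n) (x : ℝ) :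
    Summable fun n => x ^ (n + 1) / (n + 1)! * c n := by
  refine .of_norm_bounded ((summable_pow_div_factorial_mul hc x).norm.mul_left |x|) fun n => ?_
  have hsplit : x ^ (n + 1) / (n + 1)! * c n = x * (x ^ n / n ! * c n) / (n + 1) := by
    rw [factorial_succ, cast_mul, cast_succ, pow_succ]
    field_simp
  rw [hsplit, norm_div, norm_mul, Real.norm_eq_abs x]
  exact div_le_self (by positivity) (by rw [Real.norm_eq_abs, abs_of_nonneg (by positivity)]; simp)

end ExponentialGeneratingFunction

lemma hasSum_pow_div_factorial_mul_of_partialSums {a : ℕ → ℝ} {x : ℝ}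
    (hB : Summable fun n => x ^ n / n ! * ∑ i ∈ range (n + 1), a i)
    (hI : Summable fun n => x ^ (n + 1) / (n + 1)! * ∑ i ∈ range (n + 1), a i) :
    HasSum (fun n => x ^ n / n ! * a n)
      ((∑' n, x ^ n / n ! * ∑ i ∈ range (n + 1), a i) -
        ∑' n, x ^ (n + 1) / (n + 1)! * ∑ i ∈ range (n + 1), a i) := by
  rw [← hasSum_nat_add_iff' 1]
  convert ((hasSum_nat_add_iff' 1).2 hB.hasSum).sub hI.hasSum using 1
  · ext n
    rw [sum_range_succ _ (n + 1)]
    ring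
  · simp only [range_one, sum_singleton, zero_add]
    ring

lemma hasDerivAt_exp_neg_mul_tsum_partialSums {a : ℕ → ℝ} {C R : ℝ}
    (hb : ∀ n, |∑ i ∈ range (n + 1), a i| ≤ C * R ^ n) (x : ℝ) :
    HasDerivAt (fun y => exp (-y) * ∑' n, y ^ (n + 1) / (n + 1)! * ∑ i ∈ range (n + 1), a i)
      (exp (-x) * ∑' n, x ^ n / n ! * a n) x := by
  have hA := hasSum_pow_div_factorial_mul_of_partialSums (summable_pow_div_factorial_mul hb x)
    (summable_pow_succ_div_factorial_mul hb x)
  refine ((hasDerivAt_neg x).exp.mul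
    (hasDerivAt_tsum_pow_succ_div_factorial_mul hb x)).congr_deriv ?_
  rw [hA.tsum_eq]
  ring

lemma mul_qfn (j : ℕ) (t : ℝ) :
    t * qfn j t = exp (-t) *
      ∑' n, t ^ (n + 1) / (n + 1)! * ∑ i ∈ range (n + 1), stirling1 i j / i ! := by
  rw [qfn, mul_left_comm, ← tsum_mul_left]
  congr 2 with n
  ring

/-- The averaging relation `q_j(t) = (1/t)∫_0^t p_j(s) ds` for all `j ≥ 0` and `t > 0`. -/
theorem stmt13 (j : ℕ) (t : ℝ) (ht : 0 < t) :
    qfn j t = (1 / t) * ∫ s in (0:ℝ)..t, pfn j s := by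
  have ha : ∀ n, |stirling1 n j / n !| ≤ 1 * 1 ^ n := fun n => by
    simpa using abs_stirling1_div_factorial_le_one j n
  have hb : ∀ n, |∑ i ∈ range (n + 1), stirling1 i j / i !| ≤ 1 * 2 ^ n := fun n => by
    simpa using abs_sum_range_stirling1_div_factorial_le j n
  have hderiv : ∀ x, HasDerivAt (fun s => s * qfn j s) (pfn j x) x := fun x => by
    simpa only [mul_qfn, pfn] using hasDerivAt_exp_neg_mul_tsum_partialSums hb x
  have hcont : Continuous (pfn j) :=
    (continuous_exp.comp continuous_neg).mul (continuous_tsum_pow_div_factorial_mul ha)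
  rw [intervalIntegral.integral_eq_sub_of_hasDerivAt (fun x _ => hderiv x)
    (hcont.intervalIntegrable 0 t), zero_mul, sub_zero]
  field_simp
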